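/- Let G be a finite simple graph containing no theta, pyramid, prism, or turtle as an induced subgraph, let C be a proper separator of G with full components L and R, and let H be a (C,c1,c2)-hole with frame F(H) = (c1,c2,ℓ1',ℓ1,r1,r1',ℓ2',ℓ2,r2,r2'). Assume v ∈ V(G)∖V(H) has a neighbor in the interior of H_L minus {ℓ1,ℓ2} and a neighbor in the interior of H_R minus {r1,r2}. Then v is (c1,c2)-heavy with respect to H. -/

import Mathlib

/-!
The neighbours `zL ∈ H_L` and `zR ∈ H_R` of `v` given by the hypotheses are nonadjacent to
`c₁` and `c₂` (each `cᵢ` has only the two neighbours `ℓᵢ`, `rᵢ` in the hole), and they have no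
common neighbour in `H` because `L` and `R` are anticomplete; hence `v` is major.

If some extended neighbourhood of `v` contained `c₁` and `c₂`, it would contain a `c₁c₂`-path
`P` of `H` whose interior neighbours of `v` are all adjacent to `c₁` or `c₂`. Since `H` induces
a 2-regular graph, a path in `H` is determined by its ends and its second vertex, so `P` is `H_L`
or `H_R`, and then `zL` or `zR` violates the property of `P`.
-/

namespace Paper

open SimpleGraph

variable {V : Type*}

/-- The set of neighbors of `v` inside the set `H`. -/
def nbrsIn (G : SimpleGraph V) (v : V) (H : Set V) : Set V :=
  {u | u ∈ H ∧ G.Adj v u}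

/-- The vertex set of a walk. -/
def supp {G : SimpleGraph V} {a b : V} (P : G.Walk a b) : Set V :=
  {v | v ∈ P.support}

/-- `H` is a hole of `G`: an induced cycle of length at least 4.  (A finite
graph is a cycle iff it is connected and `2`-regular.) -/
def IsHole (G : SimpleGraph V) (H : Set V) : Prop :=
  H.Finite ∧ 4 ≤ H.ncard ∧ (G.induce H).Connected ∧
    ∀ v ∈ H, (nbrsIn G v H).ncard = 2

/-- `G` contains a theta as an induced subgraph. -/
def HasTheta (G : SimpleGraph V) : Prop :=
  ∃ (a b : V) (P₁ P₂ P₃ : G.Walk a b),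
    a ≠ b ∧ ¬ G.Adj a b ∧
    P₁.IsPath ∧ P₂.IsPath ∧ P₃.IsPath ∧
    2 ≤ P₁.length ∧ 2 ≤ P₂.length ∧ 2 ≤ P₃.length ∧
    (∀ v, v ∈ P₁.support → v ∈ P₂.support → v = a ∨ v = b) ∧
    (∀ v, v ∈ P₁.support → v ∈ P₃.support → v = a ∨ v = b) ∧
    (∀ v, v ∈ P₂.support → v ∈ P₃.support → v = a ∨ v = b) ∧
    IsHole G (supp P₁ ∪ supp P₂) ∧
    IsHole G (supp P₁ ∪ supp P₃) ∧
    IsHole G (supp P₂ ∪ supp P₃)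

/-- `G` contains a pyramid as an induced subgraph. -/
def HasPyramid (G : SimpleGraph V) : Prop :=
  ∃ (a b₁ b₂ b₃ : V) (P₁ : G.Walk a b₁) (P₂ : G.Walk a b₂) (P₃ : G.Walk a b₃),
    G.Adj b₁ b₂ ∧ G.Adj b₂ b₃ ∧ G.Adj b₁ b₃ ∧
    P₁.IsPath ∧ P₂.IsPath ∧ P₃.IsPath ∧
    (∀ v, v ∈ P₁.support → v ∈ P₂.support → v = a) ∧
    (∀ v, v ∈ P₁.support → v ∈ P₃.support → v = a) ∧
    (∀ v, v ∈ P₂.support → v ∈ P₃.support → v = a) ∧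
    ¬ (P₁.length = 1 ∧ P₂.length = 1) ∧
    ¬ (P₁.length = 1 ∧ P₃.length = 1) ∧
    ¬ (P₂.length = 1 ∧ P₃.length = 1) ∧
    IsHole G (supp P₁ ∪ supp P₂) ∧
    IsHole G (supp P₁ ∪ supp P₃) ∧
    IsHole G (supp P₂ ∪ supp P₃)

/-- `G` contains a prism as an induced subgraph. -/
def HasPrism (G : SimpleGraph V) : Prop :=
  ∃ (a₁ a₂ a₃ b₁ b₂ b₃ : V) (P₁ : G.Walk a₁ b₁) (P₂ : G.Walk a₂ b₂)
      (P₃ : G.Walk a₃ b₃),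
    G.Adj a₁ a₂ ∧ G.Adj a₂ a₃ ∧ G.Adj a₁ a₃ ∧
    G.Adj b₁ b₂ ∧ G.Adj b₂ b₃ ∧ G.Adj b₁ b₃ ∧
    P₁.IsPath ∧ P₂.IsPath ∧ P₃.IsPath ∧
    (∀ v, v ∈ P₁.support → v ∉ P₂.support) ∧
    (∀ v, v ∈ P₁.support → v ∉ P₃.support) ∧
    (∀ v, v ∈ P₂.support → v ∉ P₃.support) ∧
    IsHole G (supp P₁ ∪ supp P₂) ∧
    IsHole G (supp P₁ ∪ supp P₃) ∧
    IsHole G (supp P₂ ∪ supp P₃)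

/-- `G` contains a turtle as an induced subgraph. -/
def HasTurtle (G : SimpleGraph V) : Prop :=
  ∃ (a₁ b₁ a₂ b₂ x y : V) (P₁ : G.Walk a₁ b₁) (P₂ : G.Walk a₂ b₂),
    P₁.IsPath ∧ P₂.IsPath ∧
    (∀ v, v ∈ P₁.support → v ∉ P₂.support) ∧
    G.Adj a₁ a₂ ∧ G.Adj b₁ b₂ ∧ G.Adj x y ∧
    x ∉ P₁.support ∧ x ∉ P₂.support ∧ y ∉ P₁.support ∧ y ∉ P₂.support ∧
    IsHole G (supp P₁ ∪ supp P₂) ∧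
    3 ≤ (nbrsIn G x (supp P₁)).ncard ∧
    (∀ v ∈ P₂.support, ¬ G.Adj x v) ∧
    3 ≤ (nbrsIn G y (supp P₂)).ncard ∧
    (∀ v ∈ P₁.support, ¬ G.Adj y v)

/-- `G` contains no theta, pyramid, prism, or turtle as an induced subgraph. -/
def TPPTFree (G : SimpleGraph V) : Prop :=
  ¬ HasTheta G ∧ ¬ HasPyramid G ∧ ¬ HasPrism G ∧ ¬ HasTurtle G

/-- The neighborhood of a set `X`: all vertices outside `X` with a neighbor in `X`. -/
def setNbrs (G : SimpleGraph V) (X : Set V) : Set V :=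
  {v | v ∉ X ∧ ∃ x ∈ X, G.Adj x v}

/-- `A` is a connected component of `G ∖ C`. -/
def IsCompOf (G : SimpleGraph V) (C A : Set V) : Prop :=
  A.Nonempty ∧ Disjoint A C ∧ (G.induce A).Connected ∧
    ∀ a ∈ A, ∀ b : V, G.Adj a b → b ∉ C → b ∈ A

/-- `C` is a minimal separator of `G`: there are two distinct components `L`, `R`
of `G ∖ C` with `N(L) = N(R) = C`. -/
def IsMinSep (G : SimpleGraph V) (C : Set V) : Prop :=
  ∃ L R : Set V, IsCompOf G C L ∧ IsCompOf G C R ∧ L ≠ R ∧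
    setNbrs G L = C ∧ setNbrs G R = C

/-- A proper separator: a minimal separator that is not a clique. -/
def IsProperSep (G : SimpleGraph V) (C : Set V) : Prop :=
  IsMinSep G C ∧ ¬ (∀ a ∈ C, ∀ b ∈ C, a ≠ b → G.Adj a b)

/-- `u` is a minor vertex for the hole `H`: `u ∉ H`, `u` has a neighbor in `H` and
all its neighbors in `H` lie in a path of `H` with at most three vertices. -/
def IsMinorFor (G : SimpleGraph V) (u : V) (H : Set V) : Prop :=
  u ∉ H ∧ (nbrsIn G u H).Nonempty ∧
    ∃ a b c : V, a ∈ H ∧ b ∈ H ∧ c ∈ H ∧ G.Adj a b ∧ G.Adj b c ∧ a ≠ c ∧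
      nbrsIn G u H ⊆ {a, b, c}

/-- `u` is a major vertex for the hole `H`. -/
def IsMajorFor (G : SimpleGraph V) (u : V) (H : Set V) : Prop :=
  u ∉ H ∧ (nbrsIn G u H).Nonempty ∧ ¬ IsMinorFor G u H

/-- `u` is a pendant of `H`: it has a unique neighbor in `H`. -/
def IsPendant (G : SimpleGraph V) (u : V) (H : Set V) : Prop :=
  u ∉ H ∧ ∃ a : V, nbrsIn G u H = {a}

/-- `u` is a cap of `H`: it has exactly two neighbors in `H` and they are adjacent. -/
def IsCap (G : SimpleGraph V) (u : V) (H : Set V) : Prop :=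
  u ∉ H ∧ ∃ a b : V, a ≠ b ∧ G.Adj a b ∧ nbrsIn G u H = {a, b}

/-- `u` is a clone of `y` in `H`: its neighbors in `H` are exactly the three
vertices of a path `x-y-z` of `H`. -/
def IsCloneOf (G : SimpleGraph V) (u y : V) (H : Set V) : Prop :=
  u ∉ H ∧ ∃ x z : V, x ∈ H ∧ y ∈ H ∧ z ∈ H ∧ G.Adj x y ∧ G.Adj y z ∧ x ≠ z ∧
    nbrsIn G u H = {x, y, z}

/-- `u` is a clone (of some vertex) in `H`. -/
def IsClone (G : SimpleGraph V) (u : V) (H : Set V) : Prop :=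
  ∃ y, IsCloneOf G u y H

/-- `P` is a `u`-sector of the hole `H`: a path contained in `H` whose ends are
neighbors of `u` and whose interior is anticomplete to `u`. -/
def IsSector (G : SimpleGraph V) (u : V) (H : Set V) {a b : V} (P : G.Walk a b) : Prop :=
  P.IsPath ∧ (∀ v ∈ P.support, v ∈ H) ∧ G.Adj u a ∧ G.Adj u b ∧
    ∀ v ∈ P.support, v ≠ a → v ≠ b → ¬ G.Adj u v

/-- `u` and `v` are nested with respect to the hole `H`: there are distinct
`a, b ∈ H` such that one `ab`-path of `H` contains all neighbors of `u` in `H`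
and the other `ab`-path of `H` contains all neighbors of `v` in `H`. -/
def Nested (G : SimpleGraph V) (u v : V) (H : Set V) : Prop :=
  ∃ a b : V, a ∈ H ∧ b ∈ H ∧ a ≠ b ∧
    ∃ (P Q : G.Walk a b), P.IsPath ∧ Q.IsPath ∧
      supp P ∪ supp Q = H ∧
      (∀ x, x ∈ P.support → x ∈ Q.support → x = a ∨ x = b) ∧
      (∀ x ∈ H, G.Adj u x → x ∈ P.support) ∧
      (∀ x ∈ H, G.Adj v x → x ∈ Q.support)

/-- `u` is a hub for the hole `H`: its neighbors in `H` are exactly four vertices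
`p, q, r, s` appearing in that order along `H`, with `pq, rs ∈ E(G)` and
`ps, qr ∉ E(G)`. -/
def IsHub (G : SimpleGraph V) (u : V) (H : Set V) : Prop :=
  u ∉ H ∧ ∃ (p q r s : V) (A : G.Walk q r) (B : G.Walk s p),
    p ≠ q ∧ p ≠ r ∧ p ≠ s ∧ q ≠ r ∧ q ≠ s ∧ r ≠ s ∧
    nbrsIn G u H = {p, q, r, s} ∧
    G.Adj p q ∧ G.Adj r s ∧ ¬ G.Adj p s ∧ ¬ G.Adj q r ∧
    A.IsPath ∧ B.IsPath ∧
    (∀ v, v ∈ A.support → v ∉ B.support) ∧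
    supp A ∪ supp B = H

/-- `N` is an extended neighborhood of `w` in the hole `H`. -/
def IsExtNbhd (G : SimpleGraph V) (w : V) (H N : Set V) : Prop :=
  ∃ (x y x' y' : V) (Q : G.Walk x y),
    IsSector G w H Q ∧
    x' ∈ H ∧ x' ∉ Q.support ∧ G.Adj x' x ∧
    y' ∈ H ∧ y' ∉ Q.support ∧ G.Adj y' y ∧
    N = supp Q ∪ ({x', y'} ∩ nbrsIn G w H)

/-- `a` and `b` are distant in `H` with respect to `w`: no extended neighborhood
of `w` in `H` contains both `a` and `b`. -/
def Distant (G : SimpleGraph V) (w : V) (H : Set V) (a b : V) : Prop :=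
  a ∈ H ∧ b ∈ H ∧ ∀ N : Set V, IsExtNbhd G w H N → ¬ (a ∈ N ∧ b ∈ N)

/-- `P` is an `(H, w)`-significant path. -/
def IsSignificant (G : SimpleGraph V) (w : V) (H : Set V) {p q : V}
    (P : G.Walk p q) : Prop :=
  P.IsPath ∧ ∃ a b : V, a ∈ H ∧ G.Adj p a ∧ ¬ G.Adj w a ∧ b ∈ H ∧ G.Adj q b ∧
    Distant G w H a b

/-- `v` is a gem-center for the hole `H`. -/
def IsGemCenter (G : SimpleGraph V) (v : V) (H : Set V) : Prop :=
  5 ≤ H.ncard ∧ ∃ h₁ h₂ h₃ h₄ : V, h₁ ∈ H ∧ h₂ ∈ H ∧ h₃ ∈ H ∧ h₄ ∈ H ∧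
    G.Adj h₁ h₂ ∧ G.Adj h₂ h₃ ∧ G.Adj h₃ h₄ ∧ h₁ ≠ h₃ ∧ h₁ ≠ h₄ ∧ h₂ ≠ h₄ ∧
    nbrsIn G v H = {h₁, h₂, h₃, h₄}

/-- `x` is the center of a star cutset of `G`. -/
def IsStarCutsetCenter (G : SimpleGraph V) (x : V) : Prop :=
  ∃ X : Set V, x ∈ X ∧ (∀ y ∈ X, y ≠ x → G.Adj x y) ∧
    ¬ (G.induce (Xᶜ)).Preconnected

/-- `v` is `(c₁, c₂)`-heavy with respect to the hole `H`. -/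
def IsHeavy (G : SimpleGraph V) (c₁ c₂ : V) (H : Set V) (v : V) : Prop :=
  IsMajorFor G v H ∧ Distant G v H c₁ c₂

/-- The pair of paths `HL`, `HR` forms a `(C, c₁, c₂)`-hole with frame
`(c₁, c₂, ℓ₁', ℓ₁, r₁, r₁', ℓ₂', ℓ₂, r₂, r₂')`, where `L` and `R` are the two
full components of the proper separator `C`. -/
def IsCHoleWithFrame (G : SimpleGraph V) (C L R : Set V)
    (c₁ c₂ ℓ₁ ℓ₁' ℓ₂ ℓ₂' r₁ r₁' r₂ r₂' : V) (HL HR : G.Walk c₁ c₂) : Prop :=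
  HL.IsPath ∧ HR.IsPath ∧
  (∀ v, v ∈ HL.support → v ∈ HR.support → v = c₁ ∨ v = c₂) ∧
  IsHole G (supp HL ∪ supp HR) ∧
  c₁ ∈ C ∧ c₂ ∈ C ∧
  (∀ v, v ∈ HL.support → v ≠ c₁ → v ≠ c₂ → v ∈ L) ∧
  (∀ v, v ∈ HR.support → v ≠ c₁ → v ≠ c₂ → v ∈ R) ∧
  (supp HL ∪ supp HR) ∩ C = {c₁, c₂} ∧
  ℓ₁ ∈ HL.support ∧ ℓ₁ ≠ c₂ ∧ G.Adj c₁ ℓ₁ ∧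
  ℓ₂ ∈ HL.support ∧ ℓ₂ ≠ c₁ ∧ G.Adj c₂ ℓ₂ ∧
  r₁ ∈ HR.support ∧ r₁ ≠ c₂ ∧ G.Adj c₁ r₁ ∧
  r₂ ∈ HR.support ∧ r₂ ≠ c₁ ∧ G.Adj c₂ r₂ ∧
  ((ℓ₁ = ℓ₂ ∧ ℓ₁' = ℓ₁) ∨
    (ℓ₁ ≠ ℓ₂ ∧ ℓ₁' ∈ HL.support ∧ ℓ₁' ≠ c₁ ∧ ℓ₁' ≠ c₂ ∧ G.Adj ℓ₁ ℓ₁')) ∧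
  ((ℓ₁ = ℓ₂ ∧ ℓ₂' = ℓ₂) ∨
    (ℓ₁ ≠ ℓ₂ ∧ ℓ₂' ∈ HL.support ∧ ℓ₂' ≠ c₁ ∧ ℓ₂' ≠ c₂ ∧ G.Adj ℓ₂ ℓ₂')) ∧
  ((r₁ = r₂ ∧ r₁' = r₁) ∨
    (r₁ ≠ r₂ ∧ r₁' ∈ HR.support ∧ r₁' ≠ c₁ ∧ r₁' ≠ c₂ ∧ G.Adj r₁ r₁')) ∧
  ((r₁ = r₂ ∧ r₂' = r₂) ∨
    (r₁ ≠ r₂ ∧ r₂' ∈ HR.support ∧ r₂' ≠ c₁ ∧ r₂' ≠ c₂ ∧ G.Adj r₂ r₂'))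

/-- The 3-dimensional hypercube graph: vertices are elements of `{0,1}³`, two
vertices being adjacent exactly when they differ in one coordinate. -/
def cubeGraph : SimpleGraph (Fin 3 → Bool) where
  Adj x y := ∃! i, x i ≠ y i
  symm := ⟨by
    rintro x y ⟨i, hi, hj⟩
    exact ⟨i, Ne.symm hi, fun j h => hj j (Ne.symm h)⟩⟩
  loopless := ⟨by
    rintro x ⟨i, hi, -⟩
    exact hi rfl⟩

section

variable {G : SimpleGraph V}

theorem IsCompOf.subset_of_mem {C A B : Set V} (hA : IsCompOf G C A) (hB : IsCompOf G C B)
    {x : V} (hxA : x ∈ A) (hxB : x ∈ B) : B ⊆ A := by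
  suffices ∀ y : B, (G.induce B).Reachable ⟨x, hxB⟩ y → (y : V) ∈ A from
    fun y hy => this ⟨y, hy⟩ (hB.2.2.1.preconnected _ _)
  intro y hxy
  rw [reachable_iff_reflTransGen] at hxy
  induction hxy with
  | refl => exact hxA
  | tail _ h ih => exact hA.2.2.2 _ ih _ h (Set.disjoint_left.mp hB.2.1 (Subtype.prop _))

theorem IsCompOf.eq_of_mem {C A B : Set V} (hA : IsCompOf G C A) (hB : IsCompOf G C B)
    {x : V} (hxA : x ∈ A) (hxB : x ∈ B) : A = B :=
  (hA.subset_of_mem hB hxA hxB).antisymm' (hB.subset_of_mem hA hxB hxA)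

theorem IsCompOf.disjoint_of_ne {C A B : Set V} (hA : IsCompOf G C A) (hB : IsCompOf G C B)
    (hAB : A ≠ B) : Disjoint A B :=
  Set.disjoint_left.mpr fun _ ha hb => hAB (hA.eq_of_mem hB ha hb)

theorem IsCompOf.not_adj_of_ne {C A B : Set V} (hA : IsCompOf G C A) (hB : IsCompOf G C B)
    (hAB : A ≠ B) ⦃a b : V⦄ (ha : a ∈ A) (hb : b ∈ B) : ¬ G.Adj a b := fun h =>
  hAB (hA.eq_of_mem hB (hA.2.2.2 a ha b h (Set.disjoint_left.mp hB.2.1 hb)) hb)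

theorem eq_or_eq_of_ncard_nbrsIn_eq_two {H : Set V} {u p q z : V}
    (hu : (nbrsIn G u H).ncard = 2) (hp : p ∈ H) (hq : q ∈ H) (hz : z ∈ H)
    (hup : G.Adj u p) (huq : G.Adj u q) (huz : G.Adj u z) (hpq : p ≠ q) : z = p ∨ z = q := by
  have hpair : {p, q} = nbrsIn G u H := by
    refine Set.eq_of_subset_of_ncard_le ?_ (by rw [hu, Set.ncard_pair hpq])
      (Set.finite_of_ncard_ne_zero (by omega))
    rintro _ (rfl | rfl)
    exacts [⟨hp, hup⟩, ⟨hq, huq⟩]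
  have hz' : z ∈ ({p, q} : Set V) := hpair ▸ ⟨hz, huz⟩
  simpa using hz'

theorem walk_eq_of_snd_eq {H : Set V} (hH : ∀ u ∈ H, (nbrsIn G u H).ncard = 2) {a b : V}
    {P Q : G.Walk a b} (hP : P.IsPath) (hQ : Q.IsPath) (hPH : ∀ z ∈ P.support, z ∈ H)
    (hQH : ∀ z ∈ Q.support, z ∈ H) (hsnd : P.snd = Q.snd) : P = Q := by
  induction P with
  | nil => exact (Walk.eq_nil_iff_nil.mpr (Walk.isPath_iff_nil.mp hQ)).symm
  | @cons a p b hap P ih =>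
    cases Q with
    | nil => simp at hP
    | cons haq Q =>
      obtain rfl : p = _ := by simpa using hsnd
      obtain ⟨hP, haP⟩ := (Walk.cons_isPath_iff _ _).mp hP
      obtain ⟨hQ, haQ⟩ := (Walk.cons_isPath_iff _ _).mp hQ
      by_cases hpb : p = b
      · subst hpb
        rw [Walk.eq_nil_iff_nil.mpr (Walk.isPath_iff_nil.mp hP),
          Walk.eq_nil_iff_nil.mpr (Walk.isPath_iff_nil.mp hQ)]
      have mem {R : G.Walk p b} (hR : ∀ z ∈ (Walk.cons hap R).support, z ∈ H) (z : V)
          (hz : z ∈ R.support) : z ∈ H := hR z (List.mem_cons_of_mem _ hz)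
      refine congrArg _ (ih hP hQ (mem hPH) (mem hQH) ?_)
      refine (eq_or_eq_of_ncard_nbrsIn_eq_two (hH p (mem hPH p P.start_mem_support))
        (hPH a (List.mem_cons_self ..)) (mem hQH _ (Q.getVert_mem_support 1))
        (mem hPH _ (P.getVert_mem_support 1)) hap.symm (Q.adj_snd (Walk.not_nil_of_ne hpb))
        (P.adj_snd (Walk.not_nil_of_ne hpb)) ?_).resolve_left ?_
      · exact fun h => haQ (h ▸ Q.getVert_mem_support 1)
      · exact fun h => haP (h ▸ P.getVert_mem_support 1)

theorem _root_.SimpleGraph.Walk.start_notMem_support_dropUntil [DecidableEq V] {u v w : V}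
    {p : G.Walk u v} (hp : p.IsPath) (hw : w ∈ p.support) (h : u ≠ w) :
    u ∉ (p.dropUntil w hw).support := by
  intro hu
  have hnd := hp.support_nodup
  rw [← p.take_spec hw, Walk.support_append] at hnd
  rw [← Walk.cons_tail_support] at hu
  exact List.disjoint_of_nodup_append hnd (p.takeUntil w hw).start_mem_support
    ((List.mem_cons.mp hu).resolve_left h)

theorem _root_.SimpleGraph.Walk.IsPath.exists_subpath {x y a b : V} {Q : G.Walk x y}
    (hQ : Q.IsPath) (ha : a ∈ Q.support) (hb : b ∈ Q.support) :
    ∃ R : G.Walk a b, R.IsPath ∧ R.support ⊆ Q.support ∧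
      ∀ z ∈ R.support, z ≠ a → z ≠ b → z ≠ x ∧ z ≠ y := by
  classical
  by_cases hb' : b ∈ (Q.dropUntil a ha).support
  · refine ⟨(Q.dropUntil a ha).takeUntil b hb', (hQ.dropUntil ha).takeUntil hb',
      fun z hz => Q.support_dropUntil_subset_support ha
        ((Q.dropUntil a ha).support_takeUntil_subset_support hb' hz),
      fun z hz hza hzb => ⟨?_, ?_⟩⟩
    · rintro rfl
      exact Walk.start_notMem_support_dropUntil hQ ha hza
        ((Q.dropUntil a ha).support_takeUntil_subset_support hb' hz)
    · rintro rfl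
      exact Walk.endpoint_notMem_support_takeUntil (hQ.dropUntil ha) hb' hzb hz
  · have hb' : b ∈ (Q.takeUntil a ha).support := by
      rw [← Q.take_spec ha, Walk.mem_support_append_iff] at hb
      exact hb.resolve_right hb'
    refine ⟨((Q.takeUntil a ha).dropUntil b hb').reverse,
      ((hQ.takeUntil ha).dropUntil hb').reverse, fun z hz => ?_, fun z hz hza hzb => ⟨?_, ?_⟩⟩
      <;> rw [Walk.support_reverse, List.mem_reverse] at hz
    · exact Q.support_takeUntil_subset_support ha
        ((Q.takeUntil a ha).support_dropUntil_subset_support hb' hz)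
    · rintro rfl
      exact Walk.start_notMem_support_dropUntil (hQ.takeUntil ha) hb' hzb hz
    · rintro rfl
      exact Walk.endpoint_notMem_support_takeUntil hQ ha hza
        ((Q.takeUntil a ha).support_dropUntil_subset_support hb' hz)

def IsWeakSector (G : SimpleGraph V) (w : V) (H : Set V) {a b : V} (P : G.Walk a b) : Prop :=
  P.IsPath ∧ (∀ z ∈ P.support, z ∈ H) ∧
    ∀ z ∈ P.support, z ≠ a → z ≠ b → G.Adj w z → G.Adj a z ∨ G.Adj b z

theorem IsWeakSector.reverse {w a b : V} {H : Set V} {P : G.Walk a b}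
    (hP : IsWeakSector G w H P) : IsWeakSector G w H P.reverse := by
  obtain ⟨hPp, hPH, hPw⟩ := hP
  refine ⟨hPp.reverse, fun z hz => hPH z (by simpa using hz), fun z hz hzb hza hwz => ?_⟩
  exact (hPw z (by simpa using hz) hza hzb hwz).symm

theorem IsSector.reverse {w x y : V} {H : Set V} {Q : G.Walk x y} (hQ : IsSector G w H Q) :
    IsSector G w H Q.reverse := by
  obtain ⟨hQp, hQH, hwx, hwy, hQw⟩ := hQ
  exact ⟨hQp.reverse, fun z hz => hQH z (by simpa using hz), hwy, hwx,
    fun z hz hzy hzx => hQw z (by simpa using hz) hzx hzy⟩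

theorem IsSector.exists_weakSector_of_mem {w x y a b : V} {H : Set V} {Q : G.Walk x y}
    (hQ : IsSector G w H Q) (ha : a ∈ Q.support) (hb : b ∈ Q.support) :
    ∃ P : G.Walk a b, IsWeakSector G w H P := by
  obtain ⟨hQp, hQH, -, -, hQw⟩ := hQ
  obtain ⟨R, hR, hRQ, hRends⟩ := hQp.exists_subpath ha hb
  refine ⟨R, hR, fun z hz => hQH z (hRQ hz), fun z hz hza hzb hwz => ?_⟩
  exact absurd hwz (hQw z (hRQ hz) (hRends z hz hza hzb).1 (hRends z hz hza hzb).2)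

theorem IsSector.exists_weakSector_cons {w x y x' b : V} {H : Set V} {Q : G.Walk x y}
    (hQ : IsSector G w H Q) (hx' : x' ∈ H) (hx'Q : x' ∉ Q.support) (hx'x : G.Adj x' x)
    (hb : b ∈ Q.support) : ∃ P : G.Walk x' b, IsWeakSector G w H P := by
  obtain ⟨hQp, hQH, -, -, hQw⟩ := hQ
  obtain ⟨R, hR, hRQ, hRends⟩ := hQp.exists_subpath Q.start_mem_support hb
  refine ⟨.cons hx'x R, hR.cons (fun h => hx'Q (hRQ h)), ?_, fun z hz hzx' hzb hwz => ?_⟩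
  · rintro z (_ | ⟨_, hz⟩)
    exacts [hx', hQH z (hRQ hz)]
  · rw [Walk.support_cons, List.mem_cons] at hz
    replace hz := hz.resolve_left hzx'
    by_cases hzx : z = x
    · exact Or.inl (hzx ▸ hx'x)
    · exact absurd hwz (hQw z (hRQ hz) hzx (hRends z hz hzx hzb).2)

theorem IsSector.exists_weakSector_cons_concat {w x y x' y' : V} {H : Set V} {Q : G.Walk x y}
    (hQ : IsSector G w H Q) (hx' : x' ∈ H) (hx'Q : x' ∉ Q.support) (hx'x : G.Adj x' x)
    (hy' : y' ∈ H) (hy'Q : y' ∉ Q.support) (hy'y : G.Adj y' y) (hne : x' ≠ y') :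
    ∃ P : G.Walk x' y', IsWeakSector G w H P := by
  obtain ⟨hQp, hQH, -, -, hQw⟩ := hQ
  refine ⟨.cons hx'x (Q.concat hy'y.symm), (hQp.concat hy'Q _).cons ?_, ?_, ?_⟩
  · simpa [Walk.support_concat] using ⟨hx'Q, hne⟩
  · simp only [Walk.support_cons, Walk.support_concat, List.mem_cons, List.mem_append,
      List.not_mem_nil, or_false]
    rintro z (rfl | hz | rfl)
    exacts [hx', hQH z hz, hy']
  · simp only [Walk.support_cons, Walk.support_concat, List.mem_cons, List.mem_append,
      List.not_mem_nil, or_false]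
    rintro z (rfl | hz | rfl) hzx' hzy' hwz
    · exact absurd rfl hzx'
    · by_cases hzx : z = x
      · exact Or.inl (hzx ▸ hx'x)
      by_cases hzy : z = y
      · exact Or.inr (hzy ▸ hy'y)
      exact absurd hwz (hQw z hz hzx hzy)
    · exact absurd rfl hzy'

theorem IsExtNbhd.exists_weakSector {w a b : V} {H N : Set V} (hN : IsExtNbhd G w H N)
    (ha : a ∈ N) (hb : b ∈ N) (hab : a ≠ b) : ∃ P : G.Walk a b, IsWeakSector G w H P := by
  obtain ⟨x, y, x', y', Q, hQ, hx', hx'Q, hx'x, hy', hy'Q, hy'y, rfl⟩ := hN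
  have swap {c d : V} : (∃ P : G.Walk c d, IsWeakSector G w H P) →
      ∃ P : G.Walk d c, IsWeakSector G w H P := fun ⟨P, hP⟩ => ⟨P.reverse, hP.reverse⟩
  have hy'Qr : y' ∉ Q.reverse.support := by simpa using hy'Q
  have mem {c : V} : c ∈ supp Q ∪ ({x', y'} ∩ nbrsIn G w H) →
      c ∈ Q.reverse.support ∧ c ∈ Q.support ∨ c = x' ∨ c = y' := by
    rintro (hc | ⟨hc, -⟩)
    exacts [Or.inl ⟨by rwa [Walk.support_reverse, List.mem_reverse], hc⟩, Or.inr hc]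
  rcases mem ha with ⟨haQr, haQ⟩ | rfl | rfl <;> rcases mem hb with ⟨hbQr, hbQ⟩ | rfl | rfl
  · exact hQ.exists_weakSector_of_mem haQ hbQ
  · exact swap (hQ.exists_weakSector_cons hx' hx'Q hx'x haQ)
  · exact swap (hQ.reverse.exists_weakSector_cons hy' hy'Qr hy'y haQr)
  · exact hQ.exists_weakSector_cons hx' hx'Q hx'x hbQ
  · exact absurd rfl hab
  · exact hQ.exists_weakSector_cons_concat hx' hx'Q hx'x hy' hy'Q hy'y hab
  · exact hQ.reverse.exists_weakSector_cons hy' hy'Qr hy'y hbQr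
  · exact swap (hQ.exists_weakSector_cons_concat hx' hx'Q hx'x hy' hy'Q hy'y hab.symm)
  · exact absurd rfl hab

theorem distant_of_far_nbrs {v c₁ c₂ : V} {HL HR : G.Walk c₁ c₂} (hHL : HL.IsPath)
    (hHR : HR.IsPath)
    (hdeg : ∀ u ∈ supp HL ∪ supp HR, (nbrsIn G u (supp HL ∪ supp HR)).ncard = 2)
    (hsnd : HL.snd ≠ HR.snd)
    (hL : ∃ z ∈ HL.support, z ≠ c₁ ∧ z ≠ c₂ ∧ G.Adj v z ∧ ¬ G.Adj c₁ z ∧ ¬ G.Adj c₂ z)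
    (hR : ∃ z ∈ HR.support, z ≠ c₁ ∧ z ≠ c₂ ∧ G.Adj v z ∧ ¬ G.Adj c₁ z ∧ ¬ G.Adj c₂ z) :
    Distant G v (supp HL ∪ supp HR) c₁ c₂ := by
  have hc : c₁ ≠ c₂ := by
    rintro rfl
    obtain ⟨z, hz, hzc, -⟩ := hL
    rw [Walk.nil_iff_support_eq.mp (Walk.isPath_iff_nil.mp hHL), List.mem_singleton] at hz
    exact hzc hz
  have hnil {P : G.Walk c₁ c₂} : ¬ P.Nil := Walk.not_nil_of_ne hc
  refine ⟨Or.inl HL.start_mem_support, Or.inl HL.end_mem_support, ?_⟩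
  rintro N hN ⟨h₁, h₂⟩
  obtain ⟨P, hP, hPH, hPv⟩ := hN.exists_weakSector h₁ h₂ hc
  have hP_eq : P = HL ∨ P = HR := by
    refine (eq_or_eq_of_ncard_nbrsIn_eq_two (hdeg c₁ (Or.inl HL.start_mem_support))
      (Or.inl (HL.getVert_mem_support 1))
      (Or.inr (HR.getVert_mem_support 1)) (hPH _ (P.getVert_mem_support 1)) (HL.adj_snd hnil)
      (HR.adj_snd hnil) (P.adj_snd hnil) hsnd).imp ?_ ?_
    · exact walk_eq_of_snd_eq hdeg hP hHL hPH (fun z hz => Or.inl hz)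
    · exact walk_eq_of_snd_eq hdeg hP hHR hPH (fun z hz => Or.inr hz)
  obtain ⟨z, hz, hz₁, hz₂, hvz, hc₁z, hc₂z⟩ :
      ∃ z ∈ P.support, z ≠ c₁ ∧ z ≠ c₂ ∧ G.Adj v z ∧ ¬ G.Adj c₁ z ∧ ¬ G.Adj c₂ z := by
    rcases hP_eq with rfl | rfl
    exacts [hL, hR]
  exact (hPv z hz hz₁ hz₂ hvz).elim hc₁z hc₂z

theorem isMajorFor_of_far_nbrs {v a b : V} {H : Set V} (hv : v ∉ H) (ha : a ∈ H) (hb : b ∈ H)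
    (hva : G.Adj v a) (hvb : G.Adj v b) (hab : a ≠ b) (hnab : ¬ G.Adj a b)
    (hcommon : ∀ c ∈ H, G.Adj c a → ¬ G.Adj c b) : IsMajorFor G v H := by
  refine ⟨hv, ⟨a, ha, hva⟩, ?_⟩
  rintro ⟨-, -, p, q, r, -, hq, -, hpq, hqr, -, hsub⟩
  have ha' := hsub ⟨ha, hva⟩
  have hb' := hsub ⟨hb, hvb⟩
  simp only [Set.mem_insert_iff, Set.mem_singleton_iff] at ha' hb'
  rcases ha' with rfl | rfl | rfl <;> rcases hb' with rfl | rfl | rfl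
  all_goals first
    | exact hab rfl
    | exact hnab ‹G.Adj a b›
    | exact hnab ‹G.Adj b a›.symm
    | exact hcommon _ hq hpq.symm hqr
    | exact hcommon _ hq hqr hpq.symm

theorem not_adj_of_ncard_nbrsIn_eq_two {H A B : Set V} {c ℓ r z : V}
    (hc : (nbrsIn G c H).ncard = 2) (hAB : Disjoint A B) (hℓ : ℓ ∈ H) (hr : r ∈ H) (hz : z ∈ H)
    (hℓA : ℓ ∈ A) (hrB : r ∈ B) (hzA : z ∈ A) (hcℓ : G.Adj c ℓ) (hcr : G.Adj c r)
    (hzℓ : z ≠ ℓ) : ¬ G.Adj c z := fun hcz =>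
  (eq_or_eq_of_ncard_nbrsIn_eq_two hc hℓ hr hz hcℓ hcr hcz (hAB.ne_of_mem hℓA hrB)).elim hzℓ
    (hAB.ne_of_mem hzA hrB)

theorem isHeavy_of_far_nbrs {v c₁ c₂ zL zR : V} {L R : Set V} {HL HR : G.Walk c₁ c₂}
    (hHL : HL.IsPath) (hHR : HR.IsPath)
    (hdeg : ∀ u ∈ supp HL ∪ supp HR, (nbrsIn G u (supp HL ∪ supp HR)).ncard = 2)
    (hLin : ∀ z ∈ HL.support, z ≠ c₁ → z ≠ c₂ → z ∈ L)
    (hRin : ∀ z ∈ HR.support, z ≠ c₁ → z ≠ c₂ → z ∈ R)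
    (hdisj : Disjoint L R) (hanti : ∀ ⦃a b : V⦄, a ∈ L → b ∈ R → ¬ G.Adj a b)
    (hv : v ∉ supp HL ∪ supp HR)
    (hzL : zL ∈ HL.support ∧ zL ≠ c₁ ∧ zL ≠ c₂ ∧ G.Adj v zL ∧ ¬ G.Adj c₁ zL ∧ ¬ G.Adj c₂ zL)
    (hzR : zR ∈ HR.support ∧ zR ≠ c₁ ∧ zR ≠ c₂ ∧ G.Adj v zR ∧ ¬ G.Adj c₁ zR ∧ ¬ G.Adj c₂ zR) :
    IsHeavy G c₁ c₂ (supp HL ∪ supp HR) v := by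
  obtain ⟨hzLH, hzLc₁, hzLc₂, hvzL, hc₁zL, hc₂zL⟩ := hzL
  obtain ⟨hzRH, hzRc₁, hzRc₂, hvzR, hc₁zR, hc₂zR⟩ := hzR
  have hzL : zL ∈ L := hLin zL hzLH hzLc₁ hzLc₂
  have hzR : zR ∈ R := hRin zR hzRH hzRc₁ hzRc₂
  have hsnd : HL.snd ≠ HR.snd := fun h => hdisj.ne_of_mem hzL (hRin zL
    (walk_eq_of_snd_eq hdeg hHL hHR (fun z hz => Or.inl hz) (fun z hz => Or.inr hz) h ▸ hzLH)
    hzLc₁ hzLc₂) rfl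
  refine ⟨isMajorFor_of_far_nbrs hv (Or.inl hzLH) (Or.inr hzRH) hvzL hvzR
    (hdisj.ne_of_mem hzL hzR) (hanti hzL hzR) ?_, distant_of_far_nbrs hHL hHR hdeg hsnd
    ⟨zL, hzLH, hzLc₁, hzLc₂, hvzL, hc₁zL, hc₂zL⟩ ⟨zR, hzRH, hzRc₁, hzRc₂, hvzR, hc₁zR, hc₂zR⟩⟩
  intro c hc hczL hczR
  by_cases hc₁ : c = c₁
  · exact hc₁zL (hc₁ ▸ hczL)
  by_cases hc₂ : c = c₂
  · exact hc₂zL (hc₂ ▸ hczL)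
  rcases hc with hc | hc
  · exact hanti (hLin c hc hc₁ hc₂) hzR hczR
  · exact hanti hzL (hRin c hc hc₁ hc₂) hczL.symm

end

theorem heavy_of_interior_neighbors_general {V : Type*} (G : SimpleGraph V)
    (C L R : Set V)
    (c₁ c₂ ℓ₁ ℓ₁' ℓ₂ ℓ₂' r₁ r₁' r₂ r₂' : V)
    (hL : IsCompOf G C L ∧ setNbrs G L = C)
    (hR : IsCompOf G C R ∧ setNbrs G R = C) (hLR : L ≠ R)
    (HL HR : G.Walk c₁ c₂)
    (hfr : IsCHoleWithFrame G C L R c₁ c₂ ℓ₁ ℓ₁' ℓ₂ ℓ₂' r₁ r₁' r₂ r₂' HL HR)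
    (v : V) (hv : v ∉ supp HL ∪ supp HR)
    (hvL : ∃ z ∈ HL.support, z ≠ c₁ ∧ z ≠ c₂ ∧ z ≠ ℓ₁ ∧ z ≠ ℓ₂ ∧ G.Adj v z)
    (hvR : ∃ z ∈ HR.support, z ≠ c₁ ∧ z ≠ c₂ ∧ z ≠ r₁ ∧ z ≠ r₂ ∧ G.Adj v z) :
    IsHeavy G c₁ c₂ (supp HL ∪ supp HR) v := by
  obtain ⟨hHL, hHR, -, ⟨-, -, -, hdeg⟩, -, -, hLin, hRin, -, hℓ₁, hℓ₁c₂, hc₁ℓ₁, hℓ₂, hℓ₂c₁,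
    hc₂ℓ₂, hr₁, hr₁c₂, hc₁r₁, hr₂, hr₂c₁, hc₂r₂, -⟩ := hfr
  obtain ⟨zL, hzL, hzLc₁, hzLc₂, hzLℓ₁, hzLℓ₂, hvzL⟩ := hvL
  obtain ⟨zR, hzR, hzRc₁, hzRc₂, hzRr₁, hzRr₂, hvzR⟩ := hvR
  have hdisj := hL.1.disjoint_of_ne hR.1 hLR
  have hzLL := hLin zL hzL hzLc₁ hzLc₂
  have hzRR := hRin zR hzR hzRc₁ hzRc₂
  have hℓ₁L := hLin ℓ₁ hℓ₁ hc₁ℓ₁.ne' hℓ₁c₂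
  have hℓ₂L := hLin ℓ₂ hℓ₂ hℓ₂c₁ hc₂ℓ₂.ne'
  have hr₁R := hRin r₁ hr₁ hc₁r₁.ne' hr₁c₂
  have hr₂R := hRin r₂ hr₂ hr₂c₁ hc₂r₂.ne'
  have hc₁ := hdeg c₁ (Or.inl HL.start_mem_support)
  have hc₂ := hdeg c₂ (Or.inl HL.end_mem_support)
  refine isHeavy_of_far_nbrs hHL hHR hdeg hLin hRin hdisj (hL.1.not_adj_of_ne hR.1 hLR) hv
    ⟨hzL, hzLc₁, hzLc₂, hvzL, ?_, ?_⟩ ⟨hzR, hzRc₁, hzRc₂, hvzR, ?_, ?_⟩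
  · exact not_adj_of_ncard_nbrsIn_eq_two hc₁ hdisj (.inl hℓ₁) (.inr hr₁) (.inl hzL) hℓ₁L hr₁R
      hzLL hc₁ℓ₁ hc₁r₁ hzLℓ₁
  · exact not_adj_of_ncard_nbrsIn_eq_two hc₂ hdisj (.inl hℓ₂) (.inr hr₂) (.inl hzL) hℓ₂L hr₂R
      hzLL hc₂ℓ₂ hc₂r₂ hzLℓ₂
  · exact not_adj_of_ncard_nbrsIn_eq_two hc₁ hdisj.symm (.inr hr₁) (.inl hℓ₁) (.inr hzR) hr₁R
      hℓ₁L hzRR hc₁r₁ hc₁ℓ₁ hzRr₁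
  · exact not_adj_of_ncard_nbrsIn_eq_two hc₂ hdisj.symm (.inr hr₂) (.inl hℓ₂) (.inr hzR) hr₂R
      hℓ₂L hzRR hc₂r₂ hc₂ℓ₂ hzRr₂

/-- In a (theta, pyramid, prism, turtle)-free graph, let `C` be a proper
separator with full components `L`, `R`, and let `H` be a `(C, c₁, c₂)`-hole
with frame `(c₁, c₂, ℓ₁', ℓ₁, r₁, r₁', ℓ₂', ℓ₂, r₂, r₂')`.  If
`v ∈ V(G)∖V(H)` has a neighbor in `H_L^* ∖ {ℓ₁, ℓ₂}` and a neighbor in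
`H_R^* ∖ {r₁, r₂}`, then `v` is `(c₁, c₂)`-heavy with respect to `H`. -/
theorem heavy_of_interior_neighbors {V : Type*} (G : SimpleGraph V)
    (hG : TPPTFree G) (C L R : Set V)
    (c₁ c₂ ℓ₁ ℓ₁' ℓ₂ ℓ₂' r₁ r₁' r₂ r₂' : V)
    (hCsep : IsMinSep G C)
    (hCnotclique : ¬ (∀ a ∈ C, ∀ b ∈ C, a ≠ b → G.Adj a b))
    (hL : IsCompOf G C L ∧ setNbrs G L = C)
    (hR : IsCompOf G C R ∧ setNbrs G R = C) (hLR : L ≠ R)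
    (HL HR : G.Walk c₁ c₂)
    (hfr : IsCHoleWithFrame G C L R c₁ c₂ ℓ₁ ℓ₁' ℓ₂ ℓ₂' r₁ r₁' r₂ r₂' HL HR)
    (v : V) (hv : v ∉ supp HL ∪ supp HR)
    (hvL : ∃ z ∈ HL.support, z ≠ c₁ ∧ z ≠ c₂ ∧ z ≠ ℓ₁ ∧ z ≠ ℓ₂ ∧ G.Adj v z)
    (hvR : ∃ z ∈ HR.support, z ≠ c₁ ∧ z ≠ c₂ ∧ z ≠ r₁ ∧ z ≠ r₂ ∧ G.Adj v z) :
    IsHeavy G c₁ c₂ (supp HL ∪ supp HR) v :=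
  heavy_of_interior_neighbors_general G C L R c₁ c₂ ℓ₁ ℓ₁' ℓ₂ ℓ₂' r₁ r₁' r₂ r₂' hL hR hLR HL HR hfr
    v hv hvL hvR

end Paper
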